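/- arXiv:1104.5597 — 2 statements merged into one kernel-verified Lean document; each statement's English description precedes it below -/
import Mathlib

section
/- Let t : ℕ → ℕ be a strictly increasing sequence with t(j) ≤ m for all j ≤ F, let n ≥ 1 and let N = ⌈2·n^α⌉ for some real 0 < α < 1. If F ≥ N and F ≤ m, then ∑_{j=N}^{F} log₂(t(j)/(j − n^α)) ≤ F·(3 + log₂(m/F)). -/
open Real Finset

theorem stmt_4 (m n F : ℕ) (hn : 1 ≤ n) (α : ℝ) (hα0 : 0 < α) (hα1 : α < 1)
    (t : ℕ → ℕ) (ht : StrictMono t) (htm : ∀ j : ℕ, j ≤ F → t j ≤ m)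
    (hNF : ⌈2 * (n : ℝ) ^ α⌉₊ ≤ F) (hFm : F ≤ m) :
    ∑ j ∈ Finset.Icc ⌈2 * (n : ℝ) ^ α⌉₊ F,
        max 1 (Real.logb 2 ((t j : ℝ) / ((j : ℝ) - (n : ℝ) ^ α))) ≤
      (F : ℝ) * (3 + max 1 (Real.logb 2 ((m : ℝ) / (F : ℝ)))) := by
  set N := ⌈2 * (n : ℝ) ^ α⌉₊ with hN
  have hnα : (1 : ℝ) ≤ (n : ℝ) ^ α := by
    have := Real.rpow_le_rpow (by norm_num) (show (1:ℝ) ≤ n by exact_mod_cast hn) hα0.le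
    simpa using this
  have hceil : 2 * (n : ℝ) ^ α ≤ N := Nat.le_ceil _
  have hN2 : 2 ≤ N := by
    have : (2 : ℝ) ≤ N := by nlinarith
    exact_mod_cast this
  have hF1 : 1 ≤ F := le_trans (by omega) hNF
  have hm1 : 1 ≤ m := le_trans hF1 hFm
  have hFpos : (0:ℝ) < F := by exact_mod_cast hF1
  have hmpos : (0:ℝ) < m := by exact_mod_cast hm1
  -- Step 1: pointwise bound by logb 2 (2*m/j)
  have hpt : ∀ j ∈ Finset.Icc N F,
      max 1 (Real.logb 2 ((t j : ℝ) / ((j : ℝ) - (n : ℝ) ^ α)))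
        ≤ Real.logb 2 (2 * (m : ℝ) / j) := by
    intro j hj
    rw [Finset.mem_Icc] at hj
    have hjpos : (0:ℝ) < j := by
      have : 1 ≤ j := le_trans (by omega) hj.1
      exact_mod_cast this
    have hjN : 2 * (n : ℝ) ^ α ≤ j := le_trans hceil (by exact_mod_cast hj.1)
    have hden : (n : ℝ) ^ α ≤ (j : ℝ) / 2 := by linarith
    have hdenpos : (0:ℝ) < (j : ℝ) - (n : ℝ) ^ α := by
      have : (0:ℝ) < (n:ℝ) ^ α := by linarith
      linarith
    have h2m : (2:ℝ) ≤ 2 * (m : ℝ) / j := by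
      rw [le_div_iff₀ hjpos]
      have : (j : ℝ) ≤ m := by
        exact_mod_cast le_trans hj.2 hFm
      linarith
    have h1 : (1:ℝ) ≤ Real.logb 2 (2 * (m : ℝ) / j) := by
      have := Real.logb_le_logb_of_le (b := 2) (by norm_num) (show (0:ℝ) < 2 by norm_num) h2m
      simpa using this
    refine max_le h1 ?_
    have htj : (0:ℝ) < t j := by
      have h1j : j ≤ t j := ht.le_apply
      have : 1 ≤ t j := le_trans (le_trans (by omega) hj.1) h1j
      exact_mod_cast this
    have harg : (t j : ℝ) / ((j : ℝ) - (n : ℝ) ^ α) ≤ 2 * (m : ℝ) / j := by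
      have h1 : (t j : ℝ) / ((j : ℝ) - (n : ℝ) ^ α) ≤ (m : ℝ) / ((j:ℝ)/2) := by
        apply div_le_div₀ (by positivity) ?_ (by linarith) (by linarith)
        exact_mod_cast htm j hj.2
      have h2 : (m : ℝ) / ((j:ℝ)/2) = 2 * (m : ℝ) / j := by
        field_simp
      linarith [h2 ▸ h1]
    exact Real.logb_le_logb_of_le (b := 2) (by norm_num) (div_pos htj hdenpos) harg
  have step1 : ∑ j ∈ Finset.Icc N F,
      max 1 (Real.logb 2 ((t j : ℝ) / ((j : ℝ) - (n : ℝ) ^ α)))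
      ≤ ∑ j ∈ Finset.Icc N F, Real.logb 2 (2 * (m : ℝ) / j) :=
    Finset.sum_le_sum hpt
  -- Step 2: extend the sum to Icc 1 F (all terms nonneg there)
  have hnn : ∀ j ∈ Finset.Icc 1 F, (0:ℝ) ≤ Real.logb 2 (2 * (m : ℝ) / j) := by
    intro j hj
    rw [Finset.mem_Icc] at hj
    have hjpos : (0:ℝ) < j := by exact_mod_cast hj.1
    have h2m : (1:ℝ) ≤ 2 * (m : ℝ) / j := by
      rw [le_div_iff₀ hjpos]
      have : (j : ℝ) ≤ m := by exact_mod_cast le_trans hj.2 hFm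
      linarith
    exact Real.logb_nonneg (by norm_num) h2m
  have step2 : ∑ j ∈ Finset.Icc N F, Real.logb 2 (2 * (m : ℝ) / j)
      ≤ ∑ j ∈ Finset.Icc 1 F, Real.logb 2 (2 * (m : ℝ) / j) := by
    apply Finset.sum_le_sum_of_subset_of_nonneg
    · apply Finset.Icc_subset_Icc_left; omega
    · intro j hj _; exact hnn j hj
  -- Step 3: compute the full sum
  have hsum : ∑ j ∈ Finset.Icc 1 F, Real.logb 2 (2 * (m : ℝ) / j)
      = (F : ℝ) * Real.logb 2 (2 * m) - Real.logb 2 (Nat.factorial F : ℝ) := by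
    have : ∀ j ∈ Finset.Icc 1 F, Real.logb 2 (2 * (m : ℝ) / j)
        = Real.logb 2 (2 * m) - Real.logb 2 (j : ℝ) := by
      intro j hj
      rw [Finset.mem_Icc] at hj
      have hj0 : (j:ℝ) ≠ 0 := by
        have : (0:ℝ) < j := by exact_mod_cast hj.1
        linarith
      exact Real.logb_div (by positivity) hj0
    rw [Finset.sum_congr rfl this, Finset.sum_sub_distrib, Finset.sum_const,
      Nat.card_Icc]
    congr 1
    · simp
    · simp only [Real.logb]
      rw [← Finset.sum_div]
      congr 1
      rw [← Real.log_prod]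
      · congr 1
        rw [← Nat.cast_prod]
        congr 1
        have : Finset.Icc 1 F = Finset.Ico 1 (F + 1) := by
          rw [Finset.Ico_add_one_right_eq_Icc]
        rw [this]
        exact Finset.prod_Ico_id_eq_factorial F
      · intro j hj
        rw [Finset.mem_Icc] at hj
        have : (0:ℝ) < j := by exact_mod_cast hj.1
        linarith
  -- Step 4: factorial lower bound
  have hfact : (F:ℝ) * Real.log F - F ≤ Real.log (Nat.factorial F : ℝ) := by
    have h := Real.pow_div_factorial_le_exp (F:ℝ) (le_of_lt hFpos) F
    have hfp : (0:ℝ) < (Nat.factorial F : ℝ) := by exact_mod_cast F.factorial_pos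
    have hpow : (F:ℝ) ^ F ≤ (Nat.factorial F : ℝ) * Real.exp F := by
      rw [div_le_iff₀ hfp] at h; linarith
    have hlog := Real.log_le_log (by positivity) hpow
    rw [Real.log_pow, Real.log_mul (by positivity) (Real.exp_ne_zero _),
      Real.log_exp] at hlog
    push_cast at hlog ⊢
    linarith
  -- Step 5: put it together
  have hlog2 : (0:ℝ) < Real.log 2 := Real.log_pos (by norm_num)
  have hlog2half : (1:ℝ)/2 ≤ Real.log 2 := by
    have := Real.log_two_gt_d9; linarith
  have hlogbfact : ((F:ℝ) * Real.log F - F) / Real.log 2 ≤ Real.logb 2 (Nat.factorial F : ℝ) := by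
    rw [Real.logb]
    gcongr
  have key : (F : ℝ) * Real.logb 2 (2 * m) - Real.logb 2 (Nat.factorial F : ℝ)
      ≤ (F : ℝ) * (3 + Real.logb 2 ((m : ℝ) / F)) := by
    have e1 : Real.logb 2 (2 * (m:ℝ)) = 1 + Real.logb 2 (m:ℝ) := by
      rw [Real.logb_mul (by norm_num) (by positivity), Real.logb_self_eq_one (by norm_num : (1:ℝ) < 2)]
    have e2 : Real.logb 2 ((m : ℝ) / F) = Real.logb 2 (m:ℝ) - Real.logb 2 (F:ℝ) :=
      Real.logb_div (by positivity) (by positivity)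
    have e3 : Real.logb 2 (F:ℝ) = Real.log F / Real.log 2 := rfl
    have hinv : (1:ℝ) / Real.log 2 ≤ 2 := by
      rw [div_le_iff₀ hlog2]; linarith
    have : (F : ℝ) * Real.logb 2 (2 * m) - Real.logb 2 (Nat.factorial F : ℝ)
        ≤ (F:ℝ) * (1 + Real.logb 2 (m:ℝ)) - ((F:ℝ) * Real.log F - F) / Real.log 2 := by
      rw [← e1]; linarith
    refine this.trans ?_
    rw [e2, e3]
    have expand : (F:ℝ) * (1 + Real.logb 2 (m:ℝ)) - ((F:ℝ) * Real.log F - F) / Real.log 2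
        = (F:ℝ) * (1 + 1/Real.log 2 + (Real.logb 2 (m:ℝ) - Real.log F / Real.log 2)) := by
      field_simp; ring
    rw [expand]
    apply mul_le_mul_of_nonneg_left _ hFpos.le
    linarith
  have final : (F : ℝ) * (3 + Real.logb 2 ((m : ℝ) / F))
      ≤ (F : ℝ) * (3 + max 1 (Real.logb 2 ((m : ℝ) / F))) := by
    apply mul_le_mul_of_nonneg_left _ hFpos.le
    have := le_max_right (1:ℝ) (Real.logb 2 ((m : ℝ) / F))
    linarith
  calc ∑ j ∈ Finset.Icc N F, max 1 (Real.logb 2 ((t j : ℝ) / ((j : ℝ) - (n : ℝ) ^ α)))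
      ≤ ∑ j ∈ Finset.Icc 1 F, Real.logb 2 (2 * (m : ℝ) / j) := step1.trans step2
    _ = (F : ℝ) * Real.logb 2 (2 * m) - Real.logb 2 (Nat.factorial F : ℝ) := hsum
    _ ≤ (F : ℝ) * (3 + Real.logb 2 ((m : ℝ) / F)) := key
    _ ≤ (F : ℝ) * (3 + max 1 (Real.logb 2 ((m : ℝ) / F))) := final
end

section
/- Let m ≥ 1, F ≥ 1 be integers with F ≤ m, let n ≥ 2, 0 < α < 1, and suppose 1 ≤ N ≤ F where N = ⌈2n^α⌉. If for each j with N ≤ j ≤ F the cost of the j-th event is at most max(1, log₂(m/(j − n^α))), then the total cost ∑_{j=N}^{F} max(1, log₂(m/(j − n^α))) ≤ F·(3 + max(1, log₂(m/F))) + F. -/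
open Real Finset

lemma log_factorial_lb (F : ℕ) (hF : 1 ≤ F) :
    (F : ℝ) * Real.log F - F ≤ Real.log (F.factorial) := by
  have h := Real.pow_div_factorial_le_exp (x := (F : ℝ)) (by positivity) F
  have hfac : (0 : ℝ) < F.factorial := by exact_mod_cast F.factorial_pos
  have h' : (F : ℝ) ^ F ≤ F.factorial * Real.exp F := by
    rw [div_le_iff₀ hfac] at h; linarith [h]
  have hFpos : (0 : ℝ) < F := by exact_mod_cast hF
  have := Real.log_le_log (by positivity) h'
  rw [Real.log_pow, Real.log_mul (ne_of_gt hfac) (Real.exp_pos _).ne',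
    Real.log_exp] at this
  push_cast at this ⊢
  linarith

theorem stmt_19 (m F n : ℕ) (hm : 1 ≤ m) (hF : 1 ≤ F) (hFm : F ≤ m) (hn : 2 ≤ n)
    (α : ℝ) (hα0 : 0 < α) (hα1 : α < 1)
    (hN1 : 1 ≤ ⌈2 * (n : ℝ) ^ α⌉₊) (hNF : ⌈2 * (n : ℝ) ^ α⌉₊ ≤ F) :
    ∑ j ∈ Finset.Icc ⌈2 * (n : ℝ) ^ α⌉₊ F,
        max 1 (Real.logb 2 ((m : ℝ) / ((j : ℝ) - (n : ℝ) ^ α))) ≤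
      (F : ℝ) * (3 + max 1 (Real.logb 2 ((m : ℝ) / (F : ℝ)))) + (F : ℝ) := by
  set N := ⌈2 * (n : ℝ) ^ α⌉₊ with hN
  set a : ℝ := (n : ℝ) ^ α with ha
  have ha1 : 1 ≤ a := by
    rw [ha]
    apply Real.one_le_rpow (by exact_mod_cast le_trans (by norm_num) hn) hα0.le
  have hmpos : (0 : ℝ) < m := by exact_mod_cast hm
  have hFpos : (0 : ℝ) < F := by exact_mod_cast hF
  -- Step 1: termwise bound
  have step1 : ∀ j ∈ Finset.Icc N F,
      max 1 (Real.logb 2 ((m : ℝ) / ((j : ℝ) - a)) ) ≤ 1 + Real.logb 2 ((m : ℝ) / j) := by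
    intro j hj
    rw [Finset.mem_Icc] at hj
    have h2a : 2 * a ≤ (j : ℝ) := le_trans (Nat.le_ceil _) (by exact_mod_cast hj.1)
    have hjpos : (0 : ℝ) < j := by nlinarith
    have hja : (j : ℝ) / 2 ≤ (j : ℝ) - a := by linarith
    have hja' : (0 : ℝ) < (j : ℝ) - a := by linarith
    have hjF : (j : ℝ) ≤ m := by
      exact_mod_cast le_trans hj.2 hFm
    have hmj1 : (1 : ℝ) ≤ (m : ℝ) / j := (one_le_div hjpos).mpr hjF
    have hlognn : 0 ≤ Real.logb 2 ((m : ℝ) / j) :=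
      Real.logb_nonneg (by norm_num) hmj1
    have hdiv : (m : ℝ) / ((j : ℝ) - a) ≤ 2 * ((m : ℝ) / j) := by
      rw [div_le_iff₀ hja']
      rw [mul_comm, ← mul_assoc]
      have : (m : ℝ) = (m / j) * j := by field_simp
      nlinarith [div_nonneg hmpos.le hjpos.le]
    have hlb : Real.logb 2 ((m : ℝ) / ((j : ℝ) - a)) ≤ 1 + Real.logb 2 ((m : ℝ) / j) := by
      have := Real.logb_le_logb_of_le (b := 2) (by norm_num) (by positivity) hdiv
      rwa [Real.logb_mul (by norm_num) (by positivity), show Real.logb 2 2 = 1 by simp] at this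
    exact max_le (by linarith) hlb
  have step1' : ∑ j ∈ Finset.Icc N F, max 1 (Real.logb 2 ((m : ℝ) / ((j : ℝ) - a)))
      ≤ ∑ j ∈ Finset.Icc N F, (1 + Real.logb 2 ((m : ℝ) / j)) :=
    Finset.sum_le_sum step1
  -- Step 2: enlarge to Icc 1 F
  have step2 : ∑ j ∈ Finset.Icc N F, (1 + Real.logb 2 ((m : ℝ) / j))
      ≤ ∑ j ∈ Finset.Icc 1 F, (1 + Real.logb 2 ((m : ℝ) / j)) := by
    apply Finset.sum_le_sum_of_subset_of_nonneg (Finset.Icc_subset_Icc_left hN1)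
    intro j hj _
    rw [Finset.mem_Icc] at hj
    have hjpos : (0 : ℝ) < j := by exact_mod_cast hj.1
    have hjF : (j : ℝ) ≤ m := by exact_mod_cast le_trans hj.2 hFm
    have := Real.logb_nonneg (b := 2) (by norm_num) ((one_le_div hjpos).mpr hjF)
    linarith
  -- Step 3: evaluate sum over Icc 1 F
  have hlog2 : (0.6931471803 : ℝ) < Real.log 2 := Real.log_two_gt_d9
  have hsumlog : ∑ j ∈ Finset.Icc 1 F, Real.log ((j : ℝ)) = Real.log (F.factorial) := by
    rw [← Finset.Ico_add_one_right_eq_Icc, Finset.sum_Ico_eq_sum_range,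
      ← Finset.prod_range_add_one_eq_factorial, Nat.cast_prod, Real.log_prod]
    · apply Finset.sum_congr rfl
      intro i _
      norm_num [add_comm]
    · intro i _
      have : (0:ℝ) < ((i:ℝ)+1) := by positivity
      push_cast
      exact this.ne'
  have step3 : ∑ j ∈ Finset.Icc 1 F, (1 + Real.logb 2 ((m : ℝ) / j))
      ≤ (F : ℝ) * (3 + Real.logb 2 ((m : ℝ) / F)) := by
    have hcard : (Finset.Icc 1 F).card = F := by
      rw [Nat.card_Icc]; omega
    have heq : ∑ j ∈ Finset.Icc 1 F, (1 + Real.logb 2 ((m : ℝ) / j))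
        = (F : ℝ) + ((F : ℝ) * Real.log m - Real.log (F.factorial)) / Real.log 2 := by
      rw [Finset.sum_add_distrib, Finset.sum_const, hcard, nsmul_eq_mul, mul_one]
      congr 1
      have : ∀ j ∈ Finset.Icc 1 F, Real.logb 2 ((m : ℝ) / j)
          = (Real.log m - Real.log j) / Real.log 2 := by
        intro j hj
        rw [Finset.mem_Icc] at hj
        have hjpos : (0:ℝ) < j := by exact_mod_cast hj.1
        rw [Real.logb, Real.log_div hmpos.ne' hjpos.ne']
      rw [Finset.sum_congr rfl this, ← Finset.sum_div, Finset.sum_sub_distrib,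
        Finset.sum_const, hcard, nsmul_eq_mul, hsumlog]
    rw [heq]
    have hfb := log_factorial_lb F hF
    have hlogb : Real.logb 2 ((m:ℝ)/F) = (Real.log m - Real.log F) / Real.log 2 := by
      rw [Real.logb, Real.log_div hmpos.ne' hFpos.ne']
    rw [hlogb]
    have hl2 : (0:ℝ) < Real.log 2 := by linarith
    have hnum : (F : ℝ) * Real.log m - Real.log (F.factorial)
        ≤ (F : ℝ) * (Real.log m - Real.log F) + F := by nlinarith [hfb]
    have h1 : ((F : ℝ) * Real.log m - Real.log (F.factorial)) / Real.log 2
        ≤ ((F : ℝ) * (Real.log m - Real.log F) + F) / Real.log 2 :=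
      by gcongr
    have h2 : ((F : ℝ) * (Real.log m - Real.log F) + F) / Real.log 2
        = (F : ℝ) * ((Real.log m - Real.log F) / Real.log 2) + (F : ℝ) / Real.log 2 := by
      ring
    have h3 : (F : ℝ) / Real.log 2 ≤ 2 * F := by
      rw [div_le_iff₀ hl2]; nlinarith
    linarith
  calc _ ≤ _ := step1'
    _ ≤ _ := step2
    _ ≤ (F : ℝ) * (3 + Real.logb 2 ((m : ℝ) / F)) := step3
    _ ≤ (F : ℝ) * (3 + max 1 (Real.logb 2 ((m : ℝ) / F))) + F := by
        have : Real.logb 2 ((m:ℝ)/F) ≤ max 1 _ := le_max_right _ _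
        nlinarith [hFpos]
end
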